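/- arXiv:2507.11824 — 9 statements merged into one kernel-verified Lean document; each statement's English description precedes it below -/
import Mathlib

section
/- If T is a partial isometry on a Hilbert space satisfying (1 - T*T) Tⁿ (1 - TT*) = 0 for all n ≥ 0, then T is a power partial isometry, i.e., Tⁿ is a partial isometry for every n ≥ 1. -/
/-- Purely ring-theoretic version: in any star ring, a "partial isometry"
`T` satisfying the relations `(1 -ered)… ` is a power partial isometry. -/
theorem power_partial_isometry_aux {R : Type*} [Ring R] [StarRing R]
    (T : R) (hT : T * star T * T = T)
    (hrel : ∀ n : ℕ, (1 - star T * T) * T ^ n * (1 - T * star T) = 0) :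
    ∀ n : ℕ, T ^ n * star T ^ n * T ^ n = T ^ n := by
  have hrelS : ∀ n : ℕ, (1 - T * star T) * star T ^ n * (1 - star T * T) = 0 := by
    intro n
    have h := congrArg star (hrel n)
    simpa [star_mul, star_sub, star_one, star_pow, star_star, mul_assoc] using h
  set s := star T with hs
  -- key commutation lemma: `s*T` commutes with `Tⁿ * sⁿ`
  have comm : ∀ n : ℕ, (s * T) * (T ^ n * s ^ n) = (T ^ n * s ^ n) * (s * T) := by
    intro n
    induction n with
    | zero => simp
    | succ n ih =>
      have h2 : (1 - s * T) * T ^ n * (1 - T * s) * s ^ n = 0 := by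
        rw [hrel n, zero_mul]
      have h3 : T ^ n * ((1 - T * s) * s ^ n * (1 - s * T)) = 0 := by
        rw [hrelS n, mul_zero]
      rw [pow_succ T n, pow_succ' s n]
      have hc := ih
      generalize hA : T ^ n = a at h2 h3 hc ⊢
      generalize hB : s ^ n = b at h2 h3 hc ⊢
      have I : (s * T) * (a * b)
          = a * b - (a * T) * (s * b) + (s * T) * ((a * T) * (s * b)) := by
        have key : (s * T) * (a * b)
            - (a * b - (a * T) * (s * b) + (s * T) * ((a * T) * (s * b)))
            = -((1 - s * T) * a * (1 - T * s) * b) := by noncomm_ring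
        rw [h2, neg_zero] at key
        exact sub_eq_zero.mp key
      have II : (a * b) * (s * T)
          = a * b - (a * T) * (s * b) + ((a * T) * (s * b)) * (s * T) := by
        have key : (a * b) * (s * T)
            - (a * b - (a * T) * (s * b) + ((a * T) * (s * b)) * (s * T))
            = -(a * ((1 - T * s) * b * (1 - s * T))) := by noncomm_ring
        rw [h3, neg_zero] at key
        exact sub_eq_zero.mp key
      have hcomb : a * b - (a * T) * (s * b) + (s * T) * ((a * T) * (s * b))
          = a * b - (a * T) * (s * b) + ((a * T) * (s * b)) * (s * T) := by
        rw [← I, ← II]; exact hc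
      exact add_left_cancel hcomb
  intro n
  induction n with
  | zero => simp
  | succ n ih =>
    have hc := comm n
    rw [pow_succ' T n, pow_succ s n]
    generalize hA : T ^ n = a at ih hc ⊢
    generalize hB : s ^ n = b at ih hc ⊢
    calc T * a * (b * s) * (T * a)
        = T * ((a * b) * (s * T)) * a := by noncomm_ring
      _ = T * ((s * T) * (a * b)) * a := by rw [← hc]
      _ = (T * s * T) * (a * b * a) := by noncomm_ring
      _ = T * a := by rw [hT, ih]

/-- A partial isometry `T` on a complex Hilbert space satisfying
`(1 - T*T) Tⁿ (1 - TT*) = 0` for all `n ≥ 0` is a power partial isometry: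
`Tⁿ` is a partial isometry for every `n ≥ 1`. -/
theorem power_partial_isometry
    {H : Type*} [NormedAddCommGroup H] [InnerProductSpace ℂ H] [CompleteSpace H]
    (T : H →L[ℂ] H)
    (hT : T * star T * T = T)
    (hrel : ∀ n : ℕ, (1 - star T * T) * T ^ n * (1 - T * star T) = 0) :
    ∀ n : ℕ, 1 ≤ n → T ^ n * star (T ^ n) * T ^ n = T ^ n := by
  intro n _
  have := power_partial_isometry_aux T hT hrel n
  rwa [← star_pow] at this
end

section
/- For a partial isometry T satisfying (1 - T*T) Tⁿ (1 - TT*) = 0 for all n ≥ 0, the identity T* Tⁿ⁺² T* = T* Tⁿ⁺¹ + Tⁿ⁺¹ T* - Tⁿ holds for all n ≥ 0. -/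
/-- For a partial isometry `T` satisfying `(1 - T*T) Tⁿ (1 - TT*) = 0` for all `n ≥ 0`,
the identity `T* Tⁿ⁺² T* = T* Tⁿ⁺¹ + Tⁿ⁺¹ T* - Tⁿ` holds for all `n ≥ 0`. -/
theorem partial_isometry_relation_identity
    {H : Type*} [NormedAddCommGroup H] [InnerProductSpace ℂ H] [CompleteSpace H]
    (T : H →L[ℂ] H)
    (hT : T * star T * T = T)
    (hrel : ∀ n : ℕ, (1 - star T * T) * T ^ n * (1 - T * star T) = 0) :
    ∀ n : ℕ, star T * T ^ (n + 2) * star T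
      = star T * T ^ (n + 1) + T ^ (n + 1) * star T - T ^ n := by
  intro n
  have h := hrel n
  rw [show (1 - star T * T) * T ^ n * (1 - T * star T)
      = star T * T ^ (n + 2) * star T
        - (star T * T ^ (n + 1) + T ^ (n + 1) * star T - T ^ n) from by
    simp only [pow_succ]
    noncomm_ring
    rw [show T * (T ^ n * (T * star T)) = T ^ n * (T * (T * star T)) from by
      rw [← mul_assoc, ((Commute.refl T).pow_right n).eq, mul_assoc], ((Commute.refl T).pow_right n).eq]
    abel] at h
  exact sub_eq_zero.mp h
end

section
/- Let T be a partial isometry on H with (1 - T*T) Tⁿ (1 - TT*) = 0 for all n ≥ 0, and set W = ker(T*) = range(1 - TT*). Then for integers m > n ≥ 0 and x, y ∈ W, the vectors Tᵐx and Tⁿy are orthogonal. -/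
open scoped InnerProductSpace

/-- Let `T` be a partial isometry satisfying `(1 - T*T) Tⁿ (1 - TT*) = 0` for all `n ≥ 0`,
and let `W = range (1 - TT*)`. Then for `m > n ≥ 0` and `x, y ∈ W`, the vectors `Tᵐ x`
and `Tⁿ y` are orthogonal. -/
theorem wandering_orthogonality
    {H : Type*} [NormedAddCommGroup H] [InnerProductSpace ℂ H] [CompleteSpace H]
    (T : H →L[ℂ] H)
    (hT : T * star T * T = T)
    (hrel : ∀ n : ℕ, (1 - star T * T) * T ^ n * (1 - T * star T) = 0)
    (m n : ℕ) (hmn : n < m) (x y : H)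
    (hx : ∃ u : H, x = (1 - T * star T) u)
    (hy : ∃ u : H, y = (1 - T * star T) u) :
    ⟪(T ^ m) x, (T ^ n) y⟫_ℂ = 0 := by
  obtain ⟨u, hu⟩ := hx
  obtain ⟨v, hv⟩ := hy
  -- key: T* T fixes T^k x
  have key : ∀ k : ℕ, (star T) (T ((T ^ k) x)) = (T ^ k) x := by
    intro k
    have h : ((1 - star T * T) * T ^ k * (1 - T * star T)) u = 0 := by
      rw [hrel k]; rfl
    simp only [ContinuousLinearMap.mul_apply, ContinuousLinearMap.sub_apply,
      ContinuousLinearMap.one_apply, ← hu] at h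
    have := sub_eq_zero.mp h
    exact this.symm
  -- (T*)^k kills k powers of T applied to x
  have step : ∀ k j : ℕ, ((star T) ^ k) ((T ^ (j + k)) x) = (T ^ j) x := by
    intro k
    induction k with
    | zero => intro j; simp
    | succ k ih =>
      intro j
      have e1 : (star T) ^ (k + 1) = (star T) ^ k * star T := pow_succ _ _
      have e2 : T ^ (j + (k + 1)) = T * T ^ (j + k) := by
        rw [show j + (k + 1) = (j + k) + 1 by omega, pow_succ']
      rw [e1, e2, ContinuousLinearMap.mul_apply, ContinuousLinearMap.mul_apply,
        key (j + k)]
      exact ih j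
  -- T* y = 0
  have hTy : (star T) y = 0 := by
    have hT' : star T * T * star T = star T := by
      have := congrArg star hT
      simpa [star_mul, mul_assoc] using this
    have h : star T * (1 - T * star T) = star T - star T * T * star T := by
      rw [mul_sub, mul_one, mul_assoc]
    have h2 : star T - star T * T * star T = 0 := by rw [hT']; simp
    rw [hv]
    calc (star T) ((1 - T * star T) v)
        = (star T * (1 - T * star T)) v := rfl
      _ = (star T - star T * T * star T) v := by rw [h]
      _ = 0 := by rw [h2]; rfl
  -- rewrite the inner product
  have hadj : ⟪(T ^ m) x, (T ^ n) y⟫_ℂ = ⟪((star T) ^ n) ((T ^ m) x), y⟫_ℂ := by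
    rw [← star_pow, ContinuousLinearMap.star_eq_adjoint,
      ContinuousLinearMap.adjoint_inner_left]
  rw [hadj]
  obtain ⟨s, hs⟩ : ∃ s, m = (s + 1) + n := ⟨m - n - 1, by omega⟩
  rw [hs, step n (s + 1), pow_succ', ContinuousLinearMap.mul_apply,
    ← ContinuousLinearMap.adjoint_inner_right, ← ContinuousLinearMap.star_eq_adjoint,
    hTy, inner_zero_right]
end

section
/- Let T be a partial isometry on H satisfying (1 - T*T) Tⁿ (1 - TT*) = 0 for all n ≥ 0. Let K be the closed span of ⋃_{n≥0} Tⁿ((1 - TT*)(H)). Then K is a reducing subspace for T, i.e., both T(K) ⊆ K and T*(K) ⊆ K. -/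
lemma aux_closure_stable {H : Type*} [NormedAddCommGroup H] [InnerProductSpace ℂ H]
    (f : H →L[ℂ] H) (s : Set H) (h : ∀ x ∈ s, f x ∈ Submodule.span ℂ s) :
    ∀ x ∈ (Submodule.span ℂ s).topologicalClosure,
      f x ∈ (Submodule.span ℂ s).topologicalClosure := by
  have hspan : ∀ x ∈ Submodule.span ℂ s, f x ∈ Submodule.span ℂ s := by
    intro x hx
    induction hx using Submodule.span_induction with
    | mem x hx => exact h x hx
    | zero => simp
    | add a b _ _ ha hb => simpa using Submodule.add_mem _ ha hb
    | smul c a _ ha => simpa using Submodule.smul_mem _ c ha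
  intro x hx
  have : f x ∈ closure ((Submodule.span ℂ s : Submodule ℂ H) : Set H) :=
    map_mem_closure f.continuous hx hspan
  exact this

/-- Let `T` be a partial isometry with `(1 - T*T) Tⁿ (1 - TT*) = 0` for all `n ≥ 0`, and
let `K` be the closed span of `⋃_{n ≥ 0} Tⁿ((1 - TT*)(H))`. Then `K` is a reducing
subspace for `T`: both `T(K) ⊆ K` and `T*(K) ⊆ K`. -/
theorem reducing_subspace_K
    {H : Type*} [NormedAddCommGroup H] [InnerProductSpace ℂ H] [CompleteSpace H]
    (T : H →L[ℂ] H)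
    (hT : T * star T * T = T)
    (hrel : ∀ n : ℕ, (1 - star T * T) * T ^ n * (1 - T * star T) = 0)
    (K : Submodule ℂ H)
    (hK : K = (Submodule.span ℂ
      {x : H | ∃ (n : ℕ) (u : H), x = (T ^ n) ((1 - T * star T) u)}).topologicalClosure) :
    (∀ x ∈ K, T x ∈ K) ∧ (∀ x ∈ K, (star T) x ∈ K) := by
  set s : Set H := {x : H | ∃ (n : ℕ) (u : H), x = (T ^ n) ((1 - T * star T) u)} with hs
  have hT' : star T * T * star T = star T := by
    have := congrArg star hT
    simpa [star_mul, mul_assoc] using this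
  have h1 : ∀ x ∈ s, T x ∈ Submodule.span ℂ s := by
    rintro x ⟨n, u, rfl⟩
    apply Submodule.subset_span
    refine ⟨n + 1, u, ?_⟩
    have : T ((T ^ n) ((1 - T * star T) u)) = (T * T ^ n) ((1 - T * star T) u) := rfl
    rw [this, ← pow_succ']
  have h2 : ∀ x ∈ s, (star T) x ∈ Submodule.span ℂ s := by
    rintro x ⟨n, u, rfl⟩
    cases n with
    | zero =>
      have e : (star T) ((T ^ 0) ((1 - T * star T) u)) = (star T * (1 - T * star T)) u := by
        simp [ContinuousLinearMap.mul_apply]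
      have hz : star T * (1 - T * star T) = 0 := by
        rw [mul_sub, mul_one, ← mul_assoc, hT', sub_self]
      rw [e, hz]
      simp
    | succ m =>
      have h0 : T ^ m * (1 - T * star T) - star T * T * T ^ m * (1 - T * star T) = 0 := by
        have := hrel m
        rwa [sub_mul, sub_mul, one_mul] at this
      have hkey : star T * T ^ (m + 1) * (1 - T * star T) = T ^ m * (1 - T * star T) := by
        rw [pow_succ', ← mul_assoc]
        have := sub_eq_zero.mp h0
        exact this.symm
      have e : (star T) ((T ^ (m + 1)) ((1 - T * star T) u))
          = (star T * T ^ (m + 1) * (1 - T * star T)) u := rfl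
      rw [e, hkey]
      exact Submodule.subset_span ⟨m, u, rfl⟩
  constructor
  · intro x hx
    rw [hK] at hx ⊢
    exact aux_closure_stable T s h1 x hx
  · intro x hx
    rw [hK] at hx ⊢
    exact aux_closure_stable (star T) s h2 x hx
end

section
/- Let T be a partial isometry on H with (1 - T*T) Tⁿ (1 - TT*) = 0 for all n ≥ 0. Let K be the closed span of ⋃_{n≥0} Tⁿ((1-TT*)(H)) and J the closed span of ⋃_{n≥0} T*ⁿ((1-T*T)(H)). Then K and J are orthogonal subspaces. -/
open scoped InnerProductSpace

/-- Let `T` be a partial isometry with `(1 - T*T) Tⁿ (1 - TT*) = 0` for all `n ≥ 0`.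
Let `K` be the closed span of `⋃_{n ≥ 0} Tⁿ((1 - TT*)(H))` and `J` the closed span of
`⋃_{n ≥ 0} T*ⁿ((1 - T*T)(H))`. Then `K` and `J` are orthogonal subspaces. -/
theorem K_orthogonal_J
    {H : Type*} [NormedAddCommGroup H] [InnerProductSpace ℂ H] [CompleteSpace H]
    (T : H →L[ℂ] H)
    (hT : T * star T * T = T)
    (hrel : ∀ n : ℕ, (1 - star T * T) * T ^ n * (1 - T * star T) = 0)
    (K J : Submodule ℂ H)
    (hK : K = (Submodule.span ℂ
      {x : H | ∃ (n : ℕ) (u : H), x = (T ^ n) ((1 - T * star T) u)}).topologicalClosure)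
    (hJ : J = (Submodule.span ℂ
      {x : H | ∃ (n : ℕ) (u : H), x = ((star T) ^ n) ((1 - star T * T) u)}).topologicalClosure) :
    ∀ x ∈ K, ∀ y ∈ J, ⟪x, y⟫_ℂ = 0 := by
  have key : ∀ (n m : ℕ) (u v : H),
      ⟪(T ^ n) ((1 - T * star T) u), ((star T) ^ m) ((1 - star T * T) v)⟫_ℂ = 0 := by
    intro n m u v
    have h1 : ((star T) ^ m) ((1 - star T * T) v)
        = ((star T) ^ m * (1 - star T * T)) v := rfl
    have hadj : (star T) ^ m * (1 - star T * T)
        = ContinuousLinearMap.adjoint ((1 - star T * T) * T ^ m) := by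
      rw [← ContinuousLinearMap.star_eq_adjoint]
      simp [star_mul, star_pow]
    rw [h1, hadj, ContinuousLinearMap.adjoint_inner_right]
    have h2 : ((1 - star T * T) * T ^ m) ((T ^ n) ((1 - T * star T) u))
        = (((1 - star T * T) * T ^ (m + n) * (1 - T * star T)) u) := by
      simp [ContinuousLinearMap.mul_apply, pow_add]
    rw [h2, hrel (m + n)]
    simp
  -- each generator of K is orthogonal to all of J
  have hgenK : ∀ n (u : H), ∀ y ∈ J, ⟪(T ^ n) ((1 - T * star T) u), y⟫_ℂ = 0 := by
    intro n u y hy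
    have hle : J ≤ LinearMap.ker ((innerSL ℂ ((T ^ n) ((1 - T * star T) u)) : H →ₗ[ℂ] ℂ)) := by
      rw [hJ]
      refine Submodule.topologicalClosure_minimal _ ?_ ?_
      · rw [Submodule.span_le]
        rintro z ⟨m, v, rfl⟩
        simp only [SetLike.mem_coe, LinearMap.mem_ker, ContinuousLinearMap.coe_coe, innerSL_apply_apply]
        exact key n m u v
      · exact ContinuousLinearMap.isClosed_ker _
    simpa [inner_sub_left] using hle hy
  intro x hx y hy
  have hle : K ≤ LinearMap.ker ((innerSL ℂ y : H →ₗ[ℂ] ℂ)) := by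
    rw [hK]
    refine Submodule.topologicalClosure_minimal _ ?_ ?_
    · rw [Submodule.span_le]
      rintro z ⟨n, v, rfl⟩
      simp only [SetLike.mem_coe, LinearMap.mem_ker, ContinuousLinearMap.coe_coe, innerSL_apply_apply]
      rw [inner_eq_zero_symm]
      exact hgenK n v y hy
    · exact ContinuousLinearMap.isClosed_ker _
  have : ⟪y, x⟫_ℂ = 0 := by simpa using hle hx
  rwa [inner_eq_zero_symm]
end

section
/- If S is the unilateral shift on ℓ²(ℕ), then the operator T = S ⊕ S* on ℓ²(ℕ) ⊕ ℓ²(ℕ) is a partial isometry satisfying (1 - T*T) Tⁿ (1 - TT*) = 0 for all n ≥ 0, and T is neither an isometry nor a coisometry. -/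
open ContinuousLinearMap

/-- If `S` is the unilateral shift on `ℓ²(ℕ)` (here: an operator mapping each vector of a
Hilbert basis `e` to the next one), then `T = S ⊕ S*` is a partial isometry satisfying
`(1 - T*T) Tⁿ (1 - TT*) = 0` for all `n ≥ 0`, and `T` is neither an isometry nor a
coisometry. -/
theorem shift_plus_adjoint_partial_isometry
    {H : Type*} [NormedAddCommGroup H] [InnerProductSpace ℂ H] [CompleteSpace H]
    (e : HilbertBasis ℕ ℂ H) (S : H →L[ℂ] H) (hS : ∀ k : ℕ, S (e k) = e (k + 1))
    (T : WithLp 2 (H × H) →L[ℂ] WithLp 2 (H × H))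
    (hT : T = (WithLp.prodContinuousLinearEquiv 2 ℂ H H).symm.toContinuousLinearMap ∘L
        (S.prodMap (star S)) ∘L
        (WithLp.prodContinuousLinearEquiv 2 ℂ H H).toContinuousLinearMap) :
    T * star T * T = T ∧
    (∀ n : ℕ, (1 - star T * T) * T ^ n * (1 - T * star T) = 0) ∧
    star T * T ≠ 1 ∧ T * star T ≠ 1 := by
  have horth := orthonormal_iff_ite.mp e.orthonormal
  have hne0 : e 0 ≠ 0 := e.orthonormal.ne_zero 0
  have hrepr : ∀ (x : H) (i : ℕ), e.repr (star S x) i = inner ℂ (S (e i)) x := by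
    intro x i
    rw [HilbertBasis.repr_apply_apply, star_eq_adjoint, adjoint_inner_right]
  have hadj_succ : ∀ k : ℕ, star S (e (k + 1)) = e k := by
    intro k
    apply e.repr.injective
    ext i
    rw [hrepr, hS, HilbertBasis.repr_apply_apply, horth, horth]
    simp
  have hadj_zero : star S (e 0) = 0 := by
    apply e.repr.injective
    ext i
    rw [hrepr, hS, horth, map_zero]
    simp
  have hdense : Dense (Submodule.span ℂ (Set.range (e : ℕ → H)) : Set H) :=
    Submodule.dense_iff_topologicalClosure_eq_top.mpr e.dense_span
  have hSS : ∀ x : H, star S (S x) = x := by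
    have h : (star S).comp S = ContinuousLinearMap.id ℂ H := by
      apply ContinuousLinearMap.ext_on hdense
      rintro _ ⟨k, rfl⟩
      simp [hS, hadj_succ]
    intro x
    exact DFunLike.congr_fun h x
  have hTfst : ∀ x : WithLp 2 (H × H), (T x).fst = S x.fst := by
    intro x; rw [hT]; rfl
  have hTsnd : ∀ x : WithLp 2 (H × H), (T x).snd = star S x.snd := by
    intro x; rw [hT]; rfl
  have hTadj : star T = (WithLp.prodContinuousLinearEquiv 2 ℂ H H).symm.toContinuousLinearMap ∘L
      ((star S).prodMap S) ∘L (WithLp.prodContinuousLinearEquiv 2 ℂ H H).toContinuousLinearMap := by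
    rw [star_eq_adjoint]
    symm
    rw [ContinuousLinearMap.eq_adjoint_iff]
    intro x y
    have h1 : ((WithLp.prodContinuousLinearEquiv 2 ℂ H H).symm.toContinuousLinearMap ∘L
      ((star S).prodMap S) ∘L (WithLp.prodContinuousLinearEquiv 2 ℂ H H).toContinuousLinearMap) x
      = (WithLp.equiv 2 (H × H)).symm (star S x.fst, S x.snd) := rfl
    have h2 : T y = (WithLp.equiv 2 (H × H)).symm (S y.fst, star S y.snd) := by rw [hT]; rfl
    rw [h1, h2]
    simp only [WithLp.prod_inner_apply, WithLp.equiv_symm_apply, WithLp.ofLp_toLp, WithLp.fst, WithLp.snd,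
      star_eq_adjoint, adjoint_inner_left, adjoint_inner_right]
  have hTAfst : ∀ x : WithLp 2 (H × H), (star T x).fst = star S x.fst := by
    intro x; rw [hTadj]; rfl
  have hTAsnd : ∀ x : WithLp 2 (H × H), (star T x).snd = S x.snd := by
    intro x; rw [hTadj]; rfl
  refine ⟨?_, ?_, ?_, ?_⟩
  · ext x
    refine WithLp.ofLp_injective 2 (Prod.ext ?_ ?_)
    · show (T (star T (T x))).fst = (T x).fst
      rw [hTfst, hTAfst, hTfst, hSS]
    · show (T (star T (T x))).snd = (T x).snd
      rw [hTsnd, hTAsnd, hTsnd, hSS]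
  · intro n
    have hsnd0 : ∀ (z : WithLp 2 (H × H)), z.snd = 0 → ((T ^ n) z).snd = 0 := by
      induction n with
      | zero => intro z hz; simpa using hz
      | succ m ih =>
        intro z hz
        rw [pow_succ, ContinuousLinearMap.mul_apply]
        exact ih _ (by rw [hTsnd, hz, map_zero])
    ext x
    have h0 : ((1 - T * star T) x).snd = 0 := by
      simp only [ContinuousLinearMap.sub_apply, ContinuousLinearMap.one_apply,
        ContinuousLinearMap.mul_apply]
      rw [WithLp.sub_snd, hTsnd, hTAsnd, hSS, sub_self]
    refine WithLp.ofLp_injective 2 (Prod.ext ?_ ?_)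
    · show ((1 - star T * T) ((T ^ n) ((1 - T * star T) x))).fst = (0 : WithLp 2 (H × H)).fst
      simp only [ContinuousLinearMap.sub_apply, ContinuousLinearMap.one_apply,
        ContinuousLinearMap.mul_apply]
      rw [WithLp.sub_fst, hTAfst, hTfst, hSS, sub_self]
      rfl
    · show ((1 - star T * T) ((T ^ n) ((1 - T * star T) x))).snd = (0 : WithLp 2 (H × H)).snd
      simp only [ContinuousLinearMap.sub_apply, ContinuousLinearMap.one_apply,
        ContinuousLinearMap.mul_apply]
      have h0' : (x - T (star T x)).snd = 0 := by
        rw [WithLp.sub_snd, hTsnd, hTAsnd, hSS, sub_self]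
      rw [WithLp.sub_snd, hTAsnd, hTsnd, hsnd0 _ h0', map_zero, map_zero, sub_zero]
      rfl
  · intro h
    have h1 := DFunLike.congr_fun h ((WithLp.equiv 2 (H × H)).symm (0, e 0))
    have h2 : ((star T * T) ((WithLp.equiv 2 (H × H)).symm (0, e 0))).snd = 0 := by
      rw [ContinuousLinearMap.mul_apply, hTAsnd, hTsnd, WithLp.equiv_symm_apply, WithLp.toLp_snd, hadj_zero, map_zero]
    rw [h1] at h2
    rw [ContinuousLinearMap.one_apply, WithLp.equiv_symm_apply, WithLp.toLp_snd] at h2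
    exact hne0 h2
  · intro h
    have h1 := DFunLike.congr_fun h ((WithLp.equiv 2 (H × H)).symm (e 0, 0))
    have h2 : ((T * star T) ((WithLp.equiv 2 (H × H)).symm (e 0, 0))).fst = 0 := by
      rw [ContinuousLinearMap.mul_apply, hTfst, hTAfst, WithLp.equiv_symm_apply, WithLp.toLp_fst, hadj_zero, map_zero]
    rw [h1] at h2
    rw [ContinuousLinearMap.one_apply, WithLp.equiv_symm_apply, WithLp.toLp_fst] at h2
    exact hne0 h2
end

section
/- Let T be a partial isometry satisfying (1 - T*T) Tⁿ (1 - TT*) = 0 for all n ≥ 0. Then T admits a decomposition H = K ⊕ J ⊕ L into reducing subspaces such that T restricted to K is an isometry, T restricted to J is a coisometry, and T restricted to L is unitary. -/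
open scoped InnerProductSpace

set_option linter.unusedSectionVars false

section WoldAux

variable {H : Type*} [NormedAddCommGroup H] [InnerProductSpace ℂ H] [CompleteSpace H]

private lemma closure_span_le {S : Set H} {W : Submodule ℂ H}
    (hW : IsClosed (W : Set H)) (h : S ⊆ W) :
    (Submodule.span ℂ S).topologicalClosure ≤ W :=
  (Submodule.span ℂ S).topologicalClosure_minimal (Submodule.span_le.2 h) hW

private lemma norm_eq_of_inner_self_eq {x y : H} (h : ⟪x, x⟫_ℂ = ⟪y, y⟫_ℂ) : ‖x‖ = ‖y‖ := by
  rw [norm_eq_sqrt_re_inner (𝕜 := ℂ) x, norm_eq_sqrt_re_inner (𝕜 := ℂ) y, h]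

private def woldK (T : H →L[ℂ] H) : Submodule ℂ H :=
  (Submodule.span ℂ
    {x : H | ∃ (n : ℕ) (u : H), x = (T ^ n) ((1 - T * star T) u)}).topologicalClosure

private lemma woldK_gen (T : H →L[ℂ] H) (n : ℕ) (u : H) :
    (T ^ n) ((1 - T * star T) u) ∈ woldK T :=
  Submodule.le_topologicalClosure _ (Submodule.subset_span ⟨n, u, rfl⟩)

private lemma woldK_isClosed (T : H →L[ℂ] H) : IsClosed ((woldK T : Submodule ℂ H) : Set H) :=
  Submodule.isClosed_topologicalClosure _

private lemma wold_aux (T : H →L[ℂ] H) (hT : T * star T * T = T)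
    (hrel : ∀ n : ℕ, (1 - star T * T) * T ^ n * (1 - T * star T) = 0) :
    (∀ x ∈ woldK T, T x ∈ woldK T) ∧
    (∀ x ∈ woldK T, (star T) x ∈ woldK T) ∧
    (∀ x ∈ woldK T, ((1 : H →L[ℂ] H) - star T * T) x = 0) := by
  have hT' : star T * T * star T = star T := by
    have := congrArg star hT
    simpa only [star_mul, star_star, mul_assoc] using this
  refine ⟨?_, ?_, ?_⟩
  · intro x hx
    have hle : woldK T ≤ (woldK T).comap (T : H →ₗ[ℂ] H) := by
      refine closure_span_le ((woldK_isClosed T).preimage T.continuous) ?_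
      rintro _ ⟨n, u, rfl⟩
      simp only [SetLike.mem_coe, Submodule.mem_comap, ContinuousLinearMap.coe_coe]
      have h : T ((T ^ n) ((1 - T * star T) u)) = (T ^ (n + 1)) ((1 - T * star T) u) := by
        rw [pow_succ']; rfl
      rw [h]
      exact woldK_gen T (n + 1) u
    exact Submodule.mem_comap.mp (hle hx)
  · intro x hx
    have hle : woldK T ≤ (woldK T).comap ((star T : H →L[ℂ] H) : H →ₗ[ℂ] H) := by
      refine closure_span_le ((woldK_isClosed T).preimage (star T).continuous) ?_
      rintro _ ⟨n, u, rfl⟩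
      simp only [SetLike.mem_coe, Submodule.mem_comap, ContinuousLinearMap.coe_coe]
      cases n with
      | zero =>
        have h1 : star T * (1 - T * star T) = 0 := by
          rw [mul_sub, mul_one, ← mul_assoc, hT', sub_self]
        have h2 : (star T) (((1 : H →L[ℂ] H) - T * star T) u) = 0 := by
          have := congrArg (fun A : H →L[ℂ] H => A u) h1
          simpa only [ContinuousLinearMap.mul_apply, ContinuousLinearMap.zero_apply] using this
        rw [pow_zero]
        simp only [ContinuousLinearMap.one_apply]
        rw [h2]
        exact Submodule.zero_mem _
      | succ n =>
        have h4 : (1 - star T * T) * (T ^ n * (1 - T * star T)) = 0 := by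
          rw [← mul_assoc]; exact hrel n
        have h2 : star T * T ^ (n + 1) * (1 - T * star T) = T ^ n * (1 - T * star T) := by
          calc star T * T ^ (n + 1) * (1 - T * star T)
              = (star T * T) * (T ^ n * (1 - T * star T)) := by
                rw [pow_succ']; simp only [← mul_assoc]
            _ = T ^ n * (1 - T * star T) -
                (1 - star T * T) * (T ^ n * (1 - T * star T)) := by
                rw [sub_mul, one_mul, sub_sub_cancel]
            _ = T ^ n * (1 - T * star T) := by rw [h4, sub_zero]
        have h3 := congrArg (fun A : H →L[ℂ] H => A u) h2
        simp only [ContinuousLinearMap.mul_apply] at h3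
        rw [h3]
        exact woldK_gen T n u
    exact Submodule.mem_comap.mp (hle hx)
  · intro x hx
    have hle : woldK T ≤ ((1 : H →L[ℂ] H) - star T * T).ker := by
      refine closure_span_le (ContinuousLinearMap.isClosed_ker _) ?_
      rintro _ ⟨n, u, rfl⟩
      have := congrArg (fun A : H →L[ℂ] H => A u) (hrel n)
      simpa only [SetLike.mem_coe, LinearMap.mem_ker, ContinuousLinearMap.coe_coe, ContinuousLinearMap.mul_apply,
        ContinuousLinearMap.zero_apply] using this
    exact LinearMap.mem_ker.mp (hle hx)

end WoldAux

/-- Wold-type decomposition: a partial isometry `T` with `(1 - T*T) Tⁿ (1 - TT*) = 0`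
for all `n ≥ 0` decomposes `H = K ⊕ J ⊕ L` into reducing subspaces on which `T` is,
respectively, an isometry, a coisometry, and unitary. -/
theorem wold_type_decomposition
    {H : Type*} [NormedAddCommGroup H] [InnerProductSpace ℂ H] [CompleteSpace H]
    (T : H →L[ℂ] H)
    (hT : T * star T * T = T)
    (hrel : ∀ n : ℕ, (1 - star T * T) * T ^ n * (1 - T * star T) = 0)
    (K J L : Submodule ℂ H)
    (hK : K = (Submodule.span ℂ
      {x : H | ∃ (n : ℕ) (u : H), x = (T ^ n) ((1 - T * star T) u)}).topologicalClosure)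
    (hJ : J = (Submodule.span ℂ
      {x : H | ∃ (n : ℕ) (u : H), x = ((star T) ^ n) ((1 - star T * T) u)}).topologicalClosure)
    (hL : L = (K ⊔ J)ᗮ) :
    -- the three subspaces are pairwise orthogonal and span H
    (∀ x ∈ K, ∀ y ∈ J, ⟪x, y⟫_ℂ = 0) ∧
    (∀ x ∈ K, ∀ y ∈ L, ⟪x, y⟫_ℂ = 0) ∧
    (∀ x ∈ J, ∀ y ∈ L, ⟪x, y⟫_ℂ = 0) ∧
    (K ⊔ J ⊔ L = ⊤) ∧
    -- each subspace is reducing for T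
    ((∀ x ∈ K, T x ∈ K) ∧ (∀ x ∈ K, (star T) x ∈ K)) ∧
    ((∀ x ∈ J, T x ∈ J) ∧ (∀ x ∈ J, (star T) x ∈ J)) ∧
    ((∀ x ∈ L, T x ∈ L) ∧ (∀ x ∈ L, (star T) x ∈ L)) ∧
    -- T restricted to K is an isometry
    (∀ x ∈ K, ‖T x‖ = ‖x‖) ∧
    -- T restricted to J is a coisometry
    (∀ x ∈ J, ‖(star T) x‖ = ‖x‖) ∧
    -- T restricted to L is unitary
    (∀ x ∈ L, ‖T x‖ = ‖x‖ ∧ ‖(star T) x‖ = ‖x‖) := by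
  have hT' : star T * T * star T = star T := by
    have := congrArg star hT
    simpa only [star_mul, star_star, mul_assoc] using this
  have hrel' : ∀ n : ℕ, (1 - T * star T) * (star T) ^ n * (1 - star T * T) = 0 := by
    intro n
    have := congrArg star (hrel n)
    simpa only [star_mul, star_sub, star_one, star_pow, star_star, star_zero, mul_assoc] using this
  have hK' : K = woldK T := by rw [hK]; rfl
  have hJ' : J = woldK (star T) := by rw [hJ]; unfold woldK; simp only [star_star]
  obtain ⟨hKT, hKS, hKP⟩ := wold_aux T hT hrel
  obtain ⟨hJS, hJT, hJQ⟩ :=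
    wold_aux (star T) (by rw [star_star]; exact hT') (by intro n; rw [star_star]; exact hrel' n)
  rw [← hK'] at hKT hKS hKP
  simp only [← hJ', star_star] at hJS hJT hJQ
  have genK : ∀ (n : ℕ) (u : H), (T ^ n) ((1 - T * star T) u) ∈ K := by
    intro n u; rw [hK']; exact woldK_gen T n u
  have genJ : ∀ (n : ℕ) (u : H), ((star T) ^ n) ((1 - star T * T) u) ∈ J := by
    intro n u
    rw [hJ']
    have := woldK_gen (star T) n u
    simpa only [star_star] using this
  -- self-adjointness of the two projections
  have hsaP : ContinuousLinearMap.adjoint ((1 : H →L[ℂ] H) - star T * T) = 1 - star T * T := by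
    rw [← ContinuousLinearMap.star_eq_adjoint]
    simp only [star_sub, star_one, star_mul, star_star]
  have hsaQ : ContinuousLinearMap.adjoint ((1 : H →L[ℂ] H) - T * star T) = 1 - T * star T := by
    rw [← ContinuousLinearMap.star_eq_adjoint]
    simp only [star_sub, star_one, star_mul, star_star]
  -- the key orthogonality computation
  have key : ∀ (m n : ℕ) (v u : H),
      ⟪((star T) ^ m) ((1 - star T * T) v), (T ^ n) ((1 - T * star T) u)⟫_ℂ = 0 := by
    intro m n v u
    rw [← star_pow, ContinuousLinearMap.star_eq_adjoint,
      ContinuousLinearMap.adjoint_inner_left, ← hsaP, ContinuousLinearMap.adjoint_inner_left]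
    have h0 : ((1 : H →L[ℂ] H) - star T * T) ((T ^ m) ((T ^ n) ((1 - T * star T) u))) = 0 := by
      have h1 : (1 - star T * T) * (T ^ m * (T ^ n * (1 - T * star T))) = 0 := by
        have h2 := hrel (m + n)
        rw [pow_add] at h2
        simpa only [mul_assoc] using h2
      have := congrArg (fun A : H →L[ℂ] H => A u) h1
      simpa only [ContinuousLinearMap.mul_apply, ContinuousLinearMap.zero_apply] using this
    rw [h0, inner_zero_right]
  -- J ≤ Kᗮ
  have hJKorth : J ≤ Kᗮ := by
    rw [hJ]
    refine closure_span_le (Submodule.isClosed_orthogonal _) ?_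
    rintro _ ⟨m, v, rfl⟩
    rw [SetLike.mem_coe, Submodule.mem_orthogonal']
    intro u hu
    have hle : K ≤ (innerSL ℂ (((star T) ^ m) ((1 - star T * T) v))).ker := by
      rw [hK]
      refine closure_span_le (ContinuousLinearMap.isClosed_ker _) ?_
      rintro _ ⟨n, w, rfl⟩
      rw [SetLike.mem_coe, LinearMap.mem_ker, ContinuousLinearMap.coe_coe, innerSL_apply_apply]
      exact key m n v w
    have h2 := LinearMap.mem_ker.mp (hle hu)
    rwa [ContinuousLinearMap.coe_coe, innerSL_apply_apply] at h2
  have hKJ : ∀ x ∈ K, ∀ y ∈ J, ⟪x, y⟫_ℂ = 0 := fun x hx y hy =>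
    (Submodule.mem_orthogonal K y).mp (hJKorth hy) x hx
  have hKL : ∀ x ∈ K, ∀ y ∈ L, ⟪x, y⟫_ℂ = 0 := by
    intro x hx y hy
    rw [hL] at hy
    exact (Submodule.mem_orthogonal _ y).mp hy x (Submodule.mem_sup_left hx)
  have hJL : ∀ x ∈ J, ∀ y ∈ L, ⟪x, y⟫_ℂ = 0 := by
    intro x hx y hy
    rw [hL] at hy
    exact (Submodule.mem_orthogonal _ y).mp hy x (Submodule.mem_sup_right hx)
  -- closedness and completeness
  have hKc : IsClosed (K : Set H) := by rw [hK]; exact Submodule.isClosed_topologicalClosure _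
  have hJc : IsClosed (J : Set H) := by rw [hJ]; exact Submodule.isClosed_topologicalClosure _
  haveI : CompleteSpace K := hKc.completeSpace_coe
  haveI : CompleteSpace J := hJc.completeSpace_coe
  -- totality
  have htop : K ⊔ J ⊔ L = ⊤ := by
    rw [eq_top_iff]
    intro x _
    obtain ⟨k, hk, x', hx', rfl⟩ := K.exists_add_mem_mem_orthogonal x
    obtain ⟨j, hj, l, hl2, rfl⟩ := J.exists_add_mem_mem_orthogonal x'
    have hlK : l ∈ Kᗮ := by
      have := Submodule.sub_mem Kᗮ hx' (hJKorth hj)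
      simpa using this
    have hlL : l ∈ L := by
      rw [hL, ← Submodule.inf_orthogonal, Submodule.mem_inf]
      exact ⟨hlK, hl2⟩
    exact Submodule.add_mem _ (Submodule.mem_sup_left (Submodule.mem_sup_left hk))
      (Submodule.add_mem _ (Submodule.mem_sup_left (Submodule.mem_sup_right hj))
        (Submodule.mem_sup_right hlL))
  -- invariance of L
  have hadjS : ContinuousLinearMap.adjoint (star T) = T := by
    rw [← ContinuousLinearMap.star_eq_adjoint, star_star]
  have hLT : ∀ x ∈ L, T x ∈ L := by
    intro x hx
    have hx2 : x ∈ (K ⊔ J)ᗮ := by rw [hL] at hx; exact hx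
    rw [hL, Submodule.mem_orthogonal]
    intro u hu
    rw [Submodule.mem_sup] at hu
    obtain ⟨y, hy, z, hz, rfl⟩ := hu
    rw [inner_add_left]
    have hy' : ⟪y, T x⟫_ℂ = 0 := by
      rw [← ContinuousLinearMap.adjoint_inner_left, ← ContinuousLinearMap.star_eq_adjoint]
      exact (Submodule.mem_orthogonal _ x).mp hx2 _ (Submodule.mem_sup_left (hKS y hy))
    have hz' : ⟪z, T x⟫_ℂ = 0 := by
      rw [← ContinuousLinearMap.adjoint_inner_left, ← ContinuousLinearMap.star_eq_adjoint]
      exact (Submodule.mem_orthogonal _ x).mp hx2 _ (Submodule.mem_sup_right (hJS z hz))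
    rw [hy', hz', add_zero]
  have hLS : ∀ x ∈ L, (star T) x ∈ L := by
    intro x hx
    have hx2 : x ∈ (K ⊔ J)ᗮ := by rw [hL] at hx; exact hx
    rw [hL, Submodule.mem_orthogonal]
    intro u hu
    rw [Submodule.mem_sup] at hu
    obtain ⟨y, hy, z, hz, rfl⟩ := hu
    rw [inner_add_left]
    have hy' : ⟪y, (star T) x⟫_ℂ = 0 := by
      rw [← ContinuousLinearMap.adjoint_inner_left, hadjS]
      exact (Submodule.mem_orthogonal _ x).mp hx2 _ (Submodule.mem_sup_left (hKT y hy))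
    have hz' : ⟪z, (star T) x⟫_ℂ = 0 := by
      rw [← ContinuousLinearMap.adjoint_inner_left, hadjS]
      exact (Submodule.mem_orthogonal _ x).mp hx2 _ (Submodule.mem_sup_right (hJT z hz))
    rw [hy', hz', add_zero]
  -- norm preservation helpers
  have isomOfP : ∀ x : H, ((1 : H →L[ℂ] H) - star T * T) x = 0 → ‖T x‖ = ‖x‖ := by
    intro x h0
    simp only [ContinuousLinearMap.sub_apply, ContinuousLinearMap.one_apply,
      ContinuousLinearMap.mul_apply] at h0
    have h1 : (star T) (T x) = x := (sub_eq_zero.mp h0).symm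
    refine norm_eq_of_inner_self_eq ?_
    calc ⟪T x, T x⟫_ℂ
        = ⟪(ContinuousLinearMap.adjoint T) (T x), x⟫_ℂ :=
          (ContinuousLinearMap.adjoint_inner_left T x (T x)).symm
      _ = ⟪x, x⟫_ℂ := by rw [← ContinuousLinearMap.star_eq_adjoint, h1]
  have isomOfQ : ∀ x : H, ((1 : H →L[ℂ] H) - T * star T) x = 0 → ‖(star T) x‖ = ‖x‖ := by
    intro x h0
    simp only [ContinuousLinearMap.sub_apply, ContinuousLinearMap.one_apply,
      ContinuousLinearMap.mul_apply] at h0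
    have h1 : T ((star T) x) = x := (sub_eq_zero.mp h0).symm
    refine norm_eq_of_inner_self_eq ?_
    calc ⟪(star T) x, (star T) x⟫_ℂ
        = ⟪(ContinuousLinearMap.adjoint (star T)) ((star T) x), x⟫_ℂ :=
          (ContinuousLinearMap.adjoint_inner_left (star T) x ((star T) x)).symm
      _ = ⟪x, x⟫_ℂ := by rw [hadjS, h1]
  have hnormK : ∀ x ∈ K, ‖T x‖ = ‖x‖ := fun x hx => isomOfP x (hKP x hx)
  have hnormJ : ∀ x ∈ J, ‖(star T) x‖ = ‖x‖ := fun x hx => isomOfQ x (hJQ x hx)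
  -- on L both projections act as identity
  have hnormL : ∀ x ∈ L, ‖T x‖ = ‖x‖ ∧ ‖(star T) x‖ = ‖x‖ := by
    intro x hx
    have hx2 : x ∈ (K ⊔ J)ᗮ := by rw [hL] at hx; exact hx
    have hgK : ((1 : H →L[ℂ] H) - T * star T) x ∈ K := by
      simpa only [pow_zero, ContinuousLinearMap.one_apply] using genK 0 x
    have hgJ : ((1 : H →L[ℂ] H) - star T * T) x ∈ J := by
      simpa only [pow_zero, ContinuousLinearMap.one_apply] using genJ 0 x
    have hQ0 : ((1 : H →L[ℂ] H) - T * star T) x = 0 := by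
      rw [← inner_self_eq_zero (𝕜 := ℂ)]
      rw [← hsaQ, ContinuousLinearMap.adjoint_inner_left, hsaQ]
      exact (Submodule.mem_orthogonal' _ x).mp hx2 _
        (Submodule.mem_sup_left (genK 0 (((1 : H →L[ℂ] H) - T * star T) x)))
      |>.symm ▸ rfl
    have hP0 : ((1 : H →L[ℂ] H) - star T * T) x = 0 := by
      rw [← inner_self_eq_zero (𝕜 := ℂ)]
      rw [← hsaP, ContinuousLinearMap.adjoint_inner_left, hsaP]
      exact (Submodule.mem_orthogonal' _ x).mp hx2 _
        (Submodule.mem_sup_right (genJ 0 (((1 : H →L[ℂ] H) - star T * T) x)))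
    exact ⟨isomOfP x hP0, isomOfQ x hQ0⟩
  exact ⟨hKJ, hKL, hJL, htop, ⟨hKT, hKS⟩, ⟨hJT, hJS⟩, ⟨hLT, hLS⟩, hnormK, hnormJ, hnormL⟩
end

section
/- Let T be a partial isometry on H with (1 - T*T) Tⁿ (1 - TT*) = 0 for all n ≥ 0, and let L = (K ⊕ J)^⊥ where K and J are as in the Wold-type decomposition. Then both 1 - TT* and 1 - T*T restrict to zero on L, so T|_L is unitary whenever L ≠ 0. -/
/-- Let `T` be a partial isometry with `(1 - T*T) Tⁿ (1 - TT*) = 0` for all `n ≥ 0`,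
and let `L = (K ⊔ J)ᗮ` where `K`, `J` are as in the Wold-type decomposition. Then both
`1 - TT*` and `1 - T*T` restrict to zero on `L`, so the restriction of `T` to `L` is
unitary (whenever `L ≠ 0`). -/
theorem restriction_to_L_unitary
    {H : Type*} [NormedAddCommGroup H] [InnerProductSpace ℂ H] [CompleteSpace H]
    (T : H →L[ℂ] H)
    (hT : T * star T * T = T)
    (hrel : ∀ n : ℕ, (1 - star T * T) * T ^ n * (1 - T * star T) = 0)
    (K J L : Submodule ℂ H)
    (hK : K = (Submodule.span ℂ
      {x : H | ∃ (n : ℕ) (u : H), x = (T ^ n) ((1 - T * star T) u)}).topologicalClosure)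
    (hJ : J = (Submodule.span ℂ
      {x : H | ∃ (n : ℕ) (u : H), x = ((star T) ^ n) ((1 - star T * T) u)}).topologicalClosure)
    (hL : L = (K ⊔ J)ᗮ) :
    ∀ x ∈ L, (1 - T * star T) x = 0 ∧ (1 - star T * T) x = 0 ∧
      ‖T x‖ = ‖x‖ ∧ ‖(star T) x‖ = ‖x‖ := by
  intro x hx
  rw [hL] at hx
  have hKmem : ∀ u : H, (1 - T * star T) u ∈ K ⊔ J := by
    intro u
    apply Submodule.mem_sup_left
    rw [hK]
    exact Submodule.le_topologicalClosure _
      (Submodule.subset_span ⟨0, u, by simp⟩)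
  have hJmem : ∀ u : H, (1 - star T * T) u ∈ K ⊔ J := by
    intro u
    apply Submodule.mem_sup_right
    rw [hJ]
    exact Submodule.le_topologicalClosure _
      (Submodule.subset_span ⟨0, u, by simp⟩)
  have hsa1 : IsSelfAdjoint (1 - T * star T) :=
    (IsSelfAdjoint.one _).sub (IsSelfAdjoint.mul_star_self T)
  have hsa2 : IsSelfAdjoint (1 - star T * T) :=
    (IsSelfAdjoint.one _).sub (IsSelfAdjoint.star_mul_self T)
  have key : ∀ (A : H →L[ℂ] H), IsSelfAdjoint A →
      (∀ u : H, A u ∈ K ⊔ J) → A x = 0 := by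
    intro A hA hmem
    have h0 : ∀ u : H, inner ℂ u (A x) = (0 : ℂ) := by
      intro u
      rw [← ContinuousLinearMap.adjoint_inner_left, ← ContinuousLinearMap.star_eq_adjoint,
        hA.star_eq]
      exact (Submodule.mem_orthogonal _ x).mp hx _ (hmem u)
    exact inner_self_eq_zero.mp (h0 (A x))
  have h1 : (1 - T * star T) x = 0 := key _ hsa1 hKmem
  have h2 : (1 - star T * T) x = 0 := key _ hsa2 hJmem
  have e1 : T ((star T) x) = x := by
    have := h1
    simp only [ContinuousLinearMap.sub_apply, ContinuousLinearMap.one_apply,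
      ContinuousLinearMap.mul_apply, sub_eq_zero] at this
    exact this.symm
  have e2 : (star T) (T x) = x := by
    have := h2
    simp only [ContinuousLinearMap.sub_apply, ContinuousLinearMap.one_apply,
      ContinuousLinearMap.mul_apply, sub_eq_zero] at this
    exact this.symm
  have norm_eq : ∀ (A : H →L[ℂ] H), (star A) (A x) = x → ‖A x‖ = ‖x‖ := by
    intro A hAx
    have hi : (inner ℂ (A x) (A x) : ℂ) = inner ℂ x x := by
      rw [← ContinuousLinearMap.adjoint_inner_right, ← ContinuousLinearMap.star_eq_adjoint, hAx]
    rw [inner_self_eq_norm_sq_to_K, inner_self_eq_norm_sq_to_K] at hi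
    have hn' : ‖A x‖ ^ 2 = ‖x‖ ^ 2 := by exact_mod_cast hi
    nlinarith [norm_nonneg (A x), norm_nonneg x]
  refine ⟨h1, h2, norm_eq T e2, norm_eq (star T) ?_⟩
  rw [star_star]
  exact e1
end

section
/- For operators a₀, …, aₙ ∈ B(H) and the unilateral shift S on ℓ²(ℕ), one has ‖∑_{k=0}^n aₖ‖ ≤ ‖∑_{k=0}^n aₖ ⊗ Sᵏ‖. -/
/-- For operators `a₀, …, aₙ ∈ B(H)` and the unilateral shift `S` on `ℓ²(ℕ)`, one has
`‖∑ₖ aₖ‖ ≤ ‖∑ₖ aₖ ⊗ Sᵏ‖`. Here the Hilbert space tensor product `H ⊗ ℓ²(ℕ)` is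
realized as `ℓ²(ℕ, H)`, and `B` is the operator corresponding to `∑ₖ aₖ ⊗ Sᵏ`, i.e.
`(B f)(m) = ∑_{k ≤ m, k ≤ n} aₖ (f (m - k))`. -/
theorem norm_sum_le_norm_sum_tensor_shift
    {H : Type*} [NormedAddCommGroup H] [InnerProductSpace ℂ H] [CompleteSpace H]
    (n : ℕ) (a : ℕ → (H →L[ℂ] H))
    (B : lp (fun _ : ℕ => H) 2 →L[ℂ] lp (fun _ : ℕ => H) 2)
    (hB : ∀ (f : lp (fun _ : ℕ => H) 2) (m : ℕ),
      (B f : ∀ _ : ℕ, H) m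
        = ∑ k ∈ Finset.range (n + 1), if k ≤ m then a k ((f : ∀ _ : ℕ, H) (m - k)) else 0) :
    ‖∑ k ∈ Finset.range (n + 1), a k‖ ≤ ‖B‖ := by
  have hrpow : ∀ r : ℝ, r ^ (2 : ℝ) = r ^ 2 := by
    intro r
    rw [show (2 : ℝ) = ((2 : ℕ) : ℝ) by norm_num, Real.rpow_natCast]
  have htoReal : ((2 : ENNReal)).toReal = 2 := by norm_num
  refine ContinuousLinearMap.opNorm_le_bound _ (norm_nonneg B) fun x => ?_
  set A := ∑ k ∈ Finset.range (n + 1), a k with hA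
  have key : ∀ N : ℕ, ((N : ℝ) - n) * ‖A x‖ ^ 2 ≤ (N : ℝ) * (‖B‖ * ‖x‖) ^ 2 := by
    intro N
    by_cases hNn : n ≤ N
    · set f : lp (fun _ : ℕ => H) 2 := ∑ j ∈ Finset.range N, lp.single 2 j x with hf
      have hcoe : ∀ i : ℕ, (f : ∀ _ : ℕ, H) i = if i < N then x else 0 := by
        intro i
        rw [hf, lp.coeFn_sum]
        simp only [Finset.sum_apply]
        by_cases h : i < N
        · rw [if_pos h, Finset.sum_eq_single i]
          · exact lp.single_apply_self (E := fun _ : ℕ => H) 2 i x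
          · intro b _ hbi
            exact lp.single_apply_ne (E := fun _ : ℕ => H) 2 b x hbi.symm
          · intro h'
            exact absurd (Finset.mem_range.2 h) h'
        · rw [if_neg h, Finset.sum_eq_zero]
          intro j hj
          refine lp.single_apply_ne (E := fun _ : ℕ => H) 2 j x ?_
          rintro rfl
          exact h (Finset.mem_range.1 hj)
      have hfn : ‖f‖ ^ (2 : ℝ) = (N : ℝ) * ‖x‖ ^ 2 := by
        have hnf := lp.norm_rpow_eq_tsum (p := 2) (by rw [htoReal]; norm_num) f
        rw [htoReal] at hnf
        rw [hnf]
        have hts : ∑' i, ‖(f : ∀ _ : ℕ, H) i‖ ^ (2 : ℝ)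
            = ∑ i ∈ Finset.range N, ‖(f : ∀ _ : ℕ, H) i‖ ^ (2 : ℝ) := by
          refine tsum_eq_sum fun i hi => ?_
          rw [hcoe i, if_neg (by simpa using hi), norm_zero,
            Real.zero_rpow two_ne_zero]
        rw [hts]
        rw [Finset.sum_congr rfl fun i hi => by
          rw [hcoe i, if_pos (Finset.mem_range.1 hi), hrpow]]
        rw [Finset.sum_const, Finset.card_range, nsmul_eq_mul]
      have hBf : ∀ m, n ≤ m → m < N → (B f : ∀ _ : ℕ, H) m = A x := by
        intro m hnm hmN
        rw [hB, hA, ContinuousLinearMap.sum_apply]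
        refine Finset.sum_congr rfl fun k hk => ?_
        have hk' : k ≤ n := Nat.lt_succ_iff.1 (Finset.mem_range.1 hk)
        rw [if_pos (hk'.trans hnm), hcoe,
          if_pos (lt_of_le_of_lt (Nat.sub_le m k) hmN)]
      have h1 : ((N : ℝ) - n) * ‖A x‖ ^ 2 ≤ ‖B f‖ ^ (2 : ℝ) := by
        have hsum := lp.sum_rpow_le_norm_rpow (p := 2)
          (by rw [htoReal]; norm_num) (B f) (Finset.Ico n N)
        rw [htoReal] at hsum
        calc ((N : ℝ) - n) * ‖A x‖ ^ 2
            = ∑ m ∈ Finset.Ico n N, ‖(B f : ∀ _ : ℕ, H) m‖ ^ (2 : ℝ) := by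
              rw [Finset.sum_congr rfl fun m hm => by
                rw [hBf m (Finset.mem_Ico.1 hm).1 (Finset.mem_Ico.1 hm).2, hrpow]]
              rw [Finset.sum_const, Nat.card_Ico, nsmul_eq_mul, Nat.cast_sub hNn]
          _ ≤ ‖B f‖ ^ (2 : ℝ) := hsum
      have h2 : ‖B f‖ ^ (2 : ℝ) ≤ (‖B‖ * ‖f‖) ^ (2 : ℝ) :=
        Real.rpow_le_rpow (norm_nonneg _) (B.le_opNorm f) (by norm_num)
      have h3 : (‖B‖ * ‖f‖) ^ (2 : ℝ) = (N : ℝ) * (‖B‖ * ‖x‖) ^ 2 := by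
        rw [Real.mul_rpow (norm_nonneg _) (norm_nonneg _), hfn, hrpow]
        ring
      linarith
    · push_neg at hNn
      have h1 : ((N : ℝ) - n) ≤ 0 := by
        have : (N : ℝ) ≤ n := by exact_mod_cast hNn.le
        linarith
      have := sq_nonneg ‖A x‖
      have h2 : ((N : ℝ) - n) * ‖A x‖ ^ 2 ≤ 0 := mul_nonpos_of_nonpos_of_nonneg h1 this
      have h3 : (0 : ℝ) ≤ (N : ℝ) * (‖B‖ * ‖x‖) ^ 2 := by positivity
      linarith
  have hsq : ‖A x‖ ^ 2 ≤ (‖B‖ * ‖x‖) ^ 2 := by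
    by_contra h
    push_neg at h
    set c := ‖A x‖ ^ 2 with hc
    set d := (‖B‖ * ‖x‖) ^ 2 with hd
    have hcd : 0 < c - d := by linarith
    obtain ⟨N, hN⟩ := exists_nat_gt ((n * c) / (c - d))
    rw [div_lt_iff₀ hcd] at hN
    have hk := key N
    nlinarith [sq_nonneg ‖A x‖]
  calc ‖A x‖ = Real.sqrt (‖A x‖ ^ 2) := by rw [Real.sqrt_sq (norm_nonneg _)]
    _ ≤ Real.sqrt ((‖B‖ * ‖x‖) ^ 2) := Real.sqrt_le_sqrt hsq
    _ = ‖B‖ * ‖x‖ := Real.sqrt_sq (by positivity)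
end
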